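/- Let M be a matroid whose ground set is not a base, such that (1) M contains at least two circuits, and (2) M has a base B and a circuit O with O \ B infinite. Then M⁺ is wild: it has a circuit C and a cocircuit D with C ∩ D infinite. -/

import Mathlib

/-- A circuit: a minimal dependent set. -/
def Matroid.IsCircuit' {α : Type*} (M : Matroid α) (C : Set α) : Prop :=
  M.Dep C ∧ ∀ ⦃D⦄, M.Dep D → D ⊆ C → D = C

/-!
Fix a base `B₀` and a circuit `O` with `O \ B₀` infinite, pick `e ∈ O` and extend `O - e` to a base
`B` of `M`, so that `O` is the fundamental circuit of `e` in `B` and `B + e` is a base of `M⁺`.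
A second circuit of `M` yields some `x ∉ B + e`, and the fundamental circuit `C` of `x` in `B + e`
with respect to `M⁺` must contain `O`: removing any `y ∈ O` leaves `C` inside the `M`-independent
set `B + e - y` plus one element, which would make `C` independent in `M⁺`. On the other hand
`E - B₀` is a cocircuit of `M⁺`, since `B₀` contains no base of `M⁺` while `B₀ + f` is one for
every `f ∉ B₀`. Hence `C ∩ (E - B₀) ⊇ O \ B₀` is infinite.
-/

open Set

namespace Matroid

variable {α : Type*} {M Mp : Matroid α} {B C C₁ C₂ I O : Set α} {e x y : α}

lemma isCircuit'_iff : M.IsCircuit' C ↔ M.IsCircuit C :=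
  isCircuit_iff.symm

lemma Indep.isCircuit_eq_of_subset_insert (hI : M.Indep I) (h₁ : M.IsCircuit C₁)
    (h₂ : M.IsCircuit C₂) (hs₁ : C₁ ⊆ insert e I) (hs₂ : C₂ ⊆ insert e I) : C₁ = C₂ :=
  (h₁.eq_fundCircuit_of_subset hI hs₁).trans (h₂.eq_fundCircuit_of_subset hI hs₂).symm

lemma Indep.exists_notMem_insert_of_isCircuit_ne (hI : M.Indep I) (h₁ : M.IsCircuit C₁)
    (h₂ : M.IsCircuit C₂) (hne : C₁ ≠ C₂) : ∃ x ∈ M.E, x ∉ insert e I := by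
  by_contra! hE
  exact hne (hI.isCircuit_eq_of_subset_insert h₁ h₂ (h₁.subset_ground.trans hE)
    (h₂.subset_ground.trans hE))

lemma Indep.indep_insert_sdiff_of_mem_isCircuit (hI : M.Indep I) (hO : M.IsCircuit O)
    (hOI : O ⊆ insert e I) (hyO : y ∈ O) : M.Indep (insert e I \ {y}) := by
  obtain ⟨heO, -⟩ := (subset_insert_iff.1 hOI).resolve_left fun h ↦ hO.not_indep (hI.subset h)
  have hground : insert e I \ {y} ⊆ M.E :=
    sdiff_subset.trans (insert_subset (hO.subset_ground heO) hI.subset_ground)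
  by_contra hdep
  obtain ⟨C, hCsub, hC⟩ := ((not_indep_iff hground).1 hdep).exists_isCircuit_subset
  have hCO : C = O := hI.isCircuit_eq_of_subset_insert hC hO (hCsub.trans sdiff_subset) hOI
  exact (hCsub (hCO ▸ hyO)).2 rfl

/-- `Mp` is `M⁺`. -/
def IsPlus (Mp M : Matroid α) : Prop :=
  ∀ X, Mp.IsBase X ↔ ∃ B e, M.IsBase B ∧ e ∈ M.E \ B ∧ X = insert e B

namespace IsPlus

lemma isBase_insert (h : Mp.IsPlus M) (hB : M.IsBase B) (he : e ∈ M.E) (heB : e ∉ B) :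
    Mp.IsBase (insert e B) :=
  (h _).2 ⟨B, e, hB, ⟨he, heB⟩, rfl⟩

lemma exists_mem_ground_notMem (h : Mp.IsPlus M) (hB : M.IsBase B) : ∃ f ∈ M.E, f ∉ B := by
  obtain ⟨X, hX⟩ := Mp.exists_isBase
  obtain ⟨B₀, e, hB₀, ⟨heE, heB₀⟩, -⟩ := (h X).1 hX
  by_contra! hEB
  have hBE : B = M.E := hB.subset_ground.antisymm hEB
  exact heB₀ ((hB₀.eq_of_subset_isBase hB (hBE ▸ hB₀.subset_ground)).symm ▸ hBE ▸ heE)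

lemma indep_of_indep_sdiff_singleton (h : Mp.IsPlus M) (hIE : I ⊆ M.E) (hI : M.Indep (I \ {y})) :
    Mp.Indep I := by
  obtain ⟨B, hB, hIB⟩ := hI.exists_isBase_superset
  by_cases hy : y ∈ M.E \ B
  · exact (h.isBase_insert hB hy.1 hy.2).indep.subset (sdiff_singleton_subset_iff.1 hIB)
  have hIB : I ⊆ B := fun a ha ↦ by
    obtain rfl | hay := eq_or_ne a y
    · exact not_not.1 fun haB ↦ hy ⟨hIE ha, haB⟩
    · exact hIB ⟨ha, hay⟩
  obtain ⟨f, hfE, hfB⟩ := h.exists_mem_ground_notMem hB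
  exact (h.isBase_insert hB hfE hfB).indep.subset (hIB.trans (subset_insert f B))

lemma dep_sdiff_singleton (h : Mp.IsPlus M) (hE : Mp.E = M.E) (hC : Mp.IsCircuit C) (y : α) :
    M.Dep (C \ {y}) := by
  have hCE : C ⊆ M.E := hE ▸ hC.subset_ground
  rw [← not_indep_iff (sdiff_subset.trans hCE)]
  exact fun hind ↦ hC.not_indep (h.indep_of_indep_sdiff_singleton hCE hind)

lemma subset_isCircuit_of_subset_insert (h : Mp.IsPlus M) (hE : Mp.E = M.E) (hI : M.Indep I)
    (hO : M.IsCircuit O) (hOI : O ⊆ insert e I) (hC : Mp.IsCircuit C)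
    (hCI : C ⊆ insert x (insert e I)) : O ⊆ C := by
  intro y hyO
  by_contra hyC
  refine (h.dep_sdiff_singleton hE hC x).not_indep
    ((hI.indep_insert_sdiff_of_mem_isCircuit hO hOI hyO).subset fun a ha ↦ ?_)
  exact ⟨(hCI ha.1).resolve_left ha.2, fun hay ↦ hyC (hay ▸ ha.1)⟩

lemma isCocircuit_ground_sdiff (h : Mp.IsPlus M) (hE : Mp.E = M.E) (hB : M.IsBase B) :
    Mp.IsCocircuit (M.E \ B) := by
  rw [isCocircuit_iff_minimal]
  refine ⟨fun X hX ↦ ?_, fun K hK hKB f hf ↦ ?_⟩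
  · obtain ⟨B₂, f, hB₂, hf, rfl⟩ := (h X).1 hX
    by_contra! hdisj
    refine (hB₂.insert_dep hf).not_indep (hB.indep.subset fun a ha ↦ ?_)
    exact not_not.1 fun haB ↦ hdisj.subset ⟨⟨hE ▸ hX.subset_ground ha, haB⟩, ha⟩
  · obtain ⟨a, haK, haB⟩ := hK _ (h.isBase_insert hB hf.1 hf.2)
    obtain rfl | haB := haB
    · exact haK
    · exact absurd haB (hKB haK).2

end IsPlus

end Matroid

theorem Mplus_wild_general {α : Type*} (M Mp : Matroid α)
    (hE : Mp.E = M.E)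
    (hB : ∀ X, Mp.IsBase X ↔ ∃ B e, M.IsBase B ∧ e ∈ M.E \ B ∧ X = insert e B)
    (htwo : ∃ C₁ C₂, M.IsCircuit' C₁ ∧ M.IsCircuit' C₂ ∧ C₁ ≠ C₂)
    (hinf : ∃ B O, M.IsBase B ∧ M.IsCircuit' O ∧ (O \ B).Infinite) :
    ∃ C D, Mp.IsCircuit' C ∧ Mp✶.IsCircuit' D ∧ (C ∩ D).Infinite := by
  have hMp : Mp.IsPlus M := hB
  simp only [Matroid.isCircuit'_iff] at htwo hinf ⊢
  obtain ⟨C₁, C₂, hC₁, hC₂, hC₁₂⟩ := htwo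
  obtain ⟨B₀, O, hB₀, hO, hOB₀⟩ := hinf
  obtain ⟨e, heO⟩ := hO.nonempty
  obtain ⟨B, hB, hOB⟩ := (hO.sdiff_singleton_indep heO).exists_isBase_superset
  have hOeB : O ⊆ insert e B := sdiff_singleton_subset_iff.1 hOB
  have heB : e ∉ B := fun he ↦ hO.not_indep (hB.indep.subset (insert_eq_of_mem he ▸ hOeB))
  obtain ⟨x, hxE, hxeB⟩ := hB.indep.exists_notMem_insert_of_isCircuit_ne (e := e) hC₁ hC₂ hC₁₂
  obtain ⟨C, hCsub, hC⟩ := ((hMp.isBase_insert hB (hO.subset_ground heO) heB).insert_dep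
    ⟨hE ▸ hxE, hxeB⟩).exists_isCircuit_subset
  have hOC : O ⊆ C := hMp.subset_isCircuit_of_subset_insert hE hB.indep hO hOeB hC hCsub
  refine ⟨C, M.E \ B₀, hC, hMp.isCocircuit_ground_sdiff hE hB₀, ?_⟩
  exact hOB₀.mono fun a ha ↦ ⟨hOC ha.1, hO.subset_ground ha.1, ha.2⟩

/-- Let `Mp = M⁺` (bases `B + e` with `B` a base of `M`, `e ∉ B`; the ground set is not a base).
If `M` contains at least two circuits, and has a base `B` and a circuit `O` with `O \ B` infinite,
then `M⁺` is wild: it has a circuit `C` and a cocircuit `D` with `C ∩ D` infinite. -/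
theorem Mplus_wild {α : Type*} (M Mp : Matroid α)
    (hEb : ¬ M.IsBase M.E) (hE : Mp.E = M.E)
    (hB : ∀ X, Mp.IsBase X ↔ ∃ B e, M.IsBase B ∧ e ∈ M.E \ B ∧ X = insert e B)
    (htwo : ∃ C₁ C₂, M.IsCircuit' C₁ ∧ M.IsCircuit' C₂ ∧ C₁ ≠ C₂)
    (hinf : ∃ B O, M.IsBase B ∧ M.IsCircuit' O ∧ (O \ B).Infinite) :
    ∃ C D, Mp.IsCircuit' C ∧ Mp✶.IsCircuit' D ∧ (C ∩ D).Infinite :=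
  Mplus_wild_general M Mp hE hB htwo hinf
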